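/- arXiv:2310.16952 — 2 statements merged into one kernel-verified Lean document; each statement's English description precedes it below -/
import Mathlib

section
/- Let m > 1 be an odd integer each of whose prime divisors p satisfies either (p ≡ 1 (mod 8) and −2 is a fourth power modulo p) or p ≡ 3 (mod 8). Then the congruence n⁴ + 2 ≡ 0 (mod m) has exactly 4^{ω₀(m)} · 2^{ω₁(m)} solutions n in ℤ/mℤ, where ω₀(m) is the number of distinct prime divisors of m of the first kind and ω₁(m) is the number of distinct prime divisors of m congruent to 3 modulo 8. If m has a prime divisor p with p ≡ 5 or 7 (mod 8), the congruence has no solutions. -/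
/-!
The number of roots of an integer polynomial modulo `m` is multiplicative in `m` by the Chinese
remainder theorem. For odd `p` every root of `X⁴ + 2` modulo `p` is simple (the derivative `4x³`
vanishes only at `0`), so Newton's step `a ↦ a - f(a)/f'(a)` across the square-zero kernel of
`ℤ/p^(k+1) → ℤ/p^k` shows that the count modulo `p^k` is the count modulo `p`.
Modulo `p`, the roots of `x⁴ = -2`, once one exists, form a coset of the fourth roots of unity in
the cyclic group `(ℤ/p)ˣ`, so there are `gcd(p - 1, 4)` of them: 4 for `p ≡ 1` and 2 for `p ≡ 3`
(mod 8). For `p ≡ 3 (mod 8)` a root exists: `-2 = s²`, and as `-1` is a non-square one of `±s` is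
a square. For `p ≡ 5, 7 (mod 8)`, `-2` is not even a square.
-/

open Polynomial

noncomputable def rootCountMod (f : ℤ[X]) (m : ℕ) : ℕ :=
  Nat.card {x : ZMod m // aeval x f = 0}

theorem Polynomial.aeval_ringHom_apply {R S F : Type*} [CommRing R] [CommRing S]
    [FunLike F R S] [RingHomClass F R S] (φ : F) (x : R) (f : ℤ[X]) :
    aeval (φ x) f = φ (aeval x f) :=
  aeval_algHom_apply (φ : R →+* S).toIntAlgHom x f

theorem card_filter_range_eq_natCard {m : ℕ} [NeZero m] (P : ZMod m → Prop) [DecidablePred P] :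
    ((Finset.range m).filter (fun n : ℕ => P n)).card = Nat.card {x // P x} := by
  rw [Nat.card_eq_fintype_card, Fintype.card_subtype]
  refine Finset.card_nbij' (fun n => (n : ZMod m)) ZMod.val ?_ ?_ ?_ ?_
  · intro n hn
    simp only [Finset.coe_filter, Finset.mem_range, Set.mem_ofPred_eq, Finset.mem_univ,
      true_and] at hn ⊢
    exact hn.2
  · intro x hx
    simp only [Finset.coe_filter, Finset.mem_range, Set.mem_ofPred_eq, Finset.mem_univ,
      true_and, ZMod.natCast_val, ZMod.cast_id', id_eq] at hx ⊢
    exact ⟨ZMod.val_lt x, hx⟩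
  · intro n hn
    exact ZMod.val_cast_of_lt (Finset.mem_range.1 (Finset.mem_filter.1 hn).1)
  · intro x _
    simp

theorem rootCountMod_mul {m n : ℕ} (h : m.Coprime n) (f : ℤ[X]) :
    rootCountMod f (m * n) = rootCountMod f m * rootCountMod f n := by
  let e := ZMod.chineseRemainder h
  rw [rootCountMod, rootCountMod, rootCountMod, ← Nat.card_prod]
  refine Nat.card_congr ((e.toEquiv.subtypeEquiv fun x => ?_).trans Equiv.subtypeProdEquivProd)
  have h1 : aeval (e x).1 f = (aeval (e x) f).1 :=
    aeval_ringHom_apply (RingHom.fst (ZMod m) (ZMod n)) (e x) f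
  have h2 : aeval (e x).2 f = (aeval (e x) f).2 :=
    aeval_ringHom_apply (RingHom.snd (ZMod m) (ZMod n)) (e x) f
  rw [← map_eq_zero_iff e e.injective, ← aeval_ringHom_apply, Prod.ext_iff]
  exact and_congr (Eq.congr h1.symm rfl) (Eq.congr h2.symm rfl)

theorem rootCountMod_one (f : ℤ[X]) : rootCountMod f 1 = 1 := by
  rw [rootCountMod, Nat.card_eq_one_iff_unique]
  exact ⟨⟨fun a b => Subtype.ext (Subsingleton.elim _ _)⟩, ⟨⟨0, Subsingleton.elim _ _⟩⟩⟩

theorem rootCountMod_eq_prod_primeFactors (f : ℤ[X]) {m : ℕ} (hm : m ≠ 0) :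
    rootCountMod f m = ∏ p ∈ m.primeFactors, rootCountMod f (p ^ m.factorization p) := by
  rw [Nat.multiplicative_factorization (rootCountMod f) (fun a b h => rootCountMod_mul h f)
    (rootCountMod_one f) hm, Nat.prod_factorization_eq_prod_primeFactors]

theorem natCard_roots_eq_of_ker_sq_eq_zero {A R S : Type*} [CommRing A] [CommRing R]
    [CommRing S] [Algebra A R] [Algebra A S] (φ : R →ₐ[A] S) (hφ : Function.Surjective φ)
    (hsq : ∀ e, φ e = 0 → e ^ 2 = 0) (f : A[X])
    (hunit : ∀ a, φ (aeval a f) = 0 → IsUnit (aeval a (derivative f))) :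
    Nat.card {a : R // aeval a f = 0} = Nat.card {b : S // aeval b f = 0} := by
  refine Nat.card_congr (Equiv.ofBijective
    (fun a => ⟨φ a, by rw [aeval_algHom_apply, a.2, map_zero]⟩) ⟨?_, ?_⟩)
  · rintro ⟨a, ha⟩ ⟨a', ha'⟩ h
    have he : φ (a' - a) = 0 := by simpa [sub_eq_zero] using congrArg Subtype.val h.symm
    have htaylor := aeval_add_of_sq_eq_zero f a (a' - a) (hsq _ he)
    rw [add_sub_cancel, ha, ha', zero_add] at htaylor
    have hu := hunit a (by rw [ha, map_zero])
    ext
    exact (sub_eq_zero.mp (hu.mul_right_eq_zero.mp htaylor.symm)).symm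
  · rintro ⟨b, hb⟩
    obtain ⟨a, rfl⟩ := hφ b
    have hfa : φ (aeval a f) = 0 := by rw [← aeval_algHom_apply, hb]
    obtain ⟨u, hu⟩ := hunit a hfa
    refine ⟨⟨a + -(aeval a f * ↑u⁻¹), ?_⟩, ?_⟩
    · rw [aeval_add_of_sq_eq_zero f a _ (hsq _ (by simp [hfa])), ← hu]
      linear_combination (-(aeval a f)) * u.mul_inv
    · ext; simp [hfa]

theorem ZMod.sq_eq_zero_of_castHom_eq_zero {m n : ℕ} (hnm : n ∣ m) (hmn : m ∣ n ^ 2)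
    {e : ZMod m} (he : ZMod.castHom hnm (ZMod n) e = 0) : e ^ 2 = 0 := by
  rw [ZMod.castHom_apply, ← ZMod.intCast_cast, ZMod.intCast_zmod_eq_zero_iff_dvd] at he
  rw [← ZMod.intCast_zmod_cast e, ← Int.cast_pow, ZMod.intCast_zmod_eq_zero_iff_dvd]
  exact (Int.natCast_dvd_natCast.2 hmn).trans (by simpa using pow_dvd_pow_of_dvd he 2)

theorem ZMod.isUnit_of_castHom_ne_zero {p k : ℕ} (hp : p.Prime) (hk : k ≠ 0) {a : ZMod (p ^ k)}
    (ha : ZMod.castHom (dvd_pow_self p hk) (ZMod p) a ≠ 0) : IsUnit a := by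
  have : NeZero (p ^ k) := ⟨pow_ne_zero k hp.ne_zero⟩
  rw [← ZMod.natCast_zmod_val a, ZMod.isUnit_natCast_iff_not_dvd_pow hp (Nat.pos_of_ne_zero hk),
    ← ZMod.natCast_eq_zero_iff]
  rwa [ZMod.castHom_apply, ← ZMod.natCast_val] at ha

theorem rootCountMod_prime_pow {p : ℕ} (hp : p.Prime) {f : ℤ[X]}
    (hf : ∀ b : ZMod p, aeval b f = 0 → aeval b (derivative f) ≠ 0) {k : ℕ} (hk : k ≠ 0) :
    rootCountMod f (p ^ k) = rootCountMod f p := by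
  obtain ⟨k, rfl⟩ := Nat.exists_eq_add_one_of_ne_zero hk
  induction k with
  | zero => rw [pow_one]
  | succ k ih =>
    rw [← ih k.succ_ne_zero, rootCountMod, rootCountMod]
    have hdvd : p ^ (k + 1) ∣ p ^ (k + 2) := pow_dvd_pow p (k + 1).le_succ
    refine natCard_roots_eq_of_ker_sq_eq_zero
      (ZMod.castHom hdvd (ZMod (p ^ (k + 1)))).toIntAlgHom (ZMod.castHom_surjective hdvd)
      (fun e he => ZMod.sq_eq_zero_of_castHom_eq_zero hdvd ?_ he) f
      (fun a (ha : ZMod.castHom hdvd _ (aeval a f) = 0) =>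
        ZMod.isUnit_of_castHom_ne_zero hp (k + 1).succ_ne_zero ?_)
    · rw [← pow_mul]; exact pow_dvd_pow p (by omega)
    · rw [← aeval_ringHom_apply]
      refine hf _ ?_
      have := congrArg (ZMod.castHom (dvd_pow_self p k.succ_ne_zero) (ZMod p)) ha
      rwa [map_zero, ← RingHom.comp_apply, ZMod.castHom_comp, ← aeval_ringHom_apply] at this

theorem FiniteField.natCard_pow_eq {F : Type*} [Field F] [Fintype F] {d : ℕ} (hd : d ≠ 0)
    {c t : F} (hc : c ≠ 0) (ht : t ^ d = c) :
    Nat.card {x : F // x ^ d = c} = (Fintype.card F - 1).gcd d := by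
  classical
  have ht0 : t ≠ 0 := by rintro rfl; exact hc (by rw [← ht, zero_pow hd])
  rw [← Fintype.card_units, ← Nat.card_eq_fintype_card, ← IsCyclic.card_powMonoidHom_ker]
  have hx0 : ∀ x : {x : F // x ^ d = c}, (x : F) ≠ 0 := fun x h0 => hc (by
    rw [← x.2, h0, zero_pow hd])
  refine Nat.card_congr
    { toFun := fun x => ⟨Units.mk0 (x / t) (div_ne_zero (hx0 x) ht0), by
        ext; simp [div_pow, x.2, ht, hc]⟩
      invFun := fun u => ⟨(u : Fˣ) * t, by
        rw [mul_pow, ← Units.val_pow_eq_pow_val,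
          show (u : Fˣ) ^ d = 1 from MonoidHom.mem_ker.1 u.2]
        simp [ht]⟩
      left_inv := fun x => by ext; simp [ht0]
      right_inv := fun u => by ext; simp [ht0] }

theorem FiniteField.exists_pow_four_eq_of_isSquare {F : Type*} [Field F] [Fintype F]
    (h1 : ¬IsSquare (-1 : F)) {a : F} (ha : IsSquare a) : ∃ x : F, x ^ 4 = a := by
  classical
  obtain ⟨s, rfl⟩ := ha
  by_cases hs : IsSquare s
  · obtain ⟨x, rfl⟩ := hs
    exact ⟨x, by ring⟩
  · have hs0 : s ≠ 0 := by rintro rfl; exact hs ⟨0, by simp⟩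
    have hχ : quadraticChar F (-s) = 1 := by
      rw [neg_eq_neg_one_mul, map_mul, quadraticChar_neg_one_iff_not_isSquare.2 h1,
        quadraticChar_neg_one_iff_not_isSquare.2 hs]
      norm_num
    obtain ⟨x, hx⟩ := (quadraticChar_one_iff_isSquare (neg_ne_zero.2 hs0)).1 hχ
    exact ⟨x, by linear_combination (s - x * x) * hx⟩

theorem aeval_X_pow_four_add_two {R : Type*} [CommRing R] (x : R) :
    aeval x (X ^ 4 + 2 : ℤ[X]) = x ^ 4 + 2 := by
  simp [map_ofNat]

theorem X_pow_four_add_two_derivative_ne_zero {p : ℕ} [Fact p.Prime] (hp2 : p ≠ 2) (b : ZMod p)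
    (hb : aeval b (X ^ 4 + 2 : ℤ[X]) = 0) : aeval b (derivative (X ^ 4 + 2 : ℤ[X])) ≠ 0 := by
  have h2 : (2 : ZMod p) ≠ 0 := Ring.two_ne_zero (by rwa [ZMod.ringChar_zmod_n])
  rw [aeval_X_pow_four_add_two] at hb
  have hb0 : b ≠ 0 := by rintro rfl; exact h2 (by simpa using hb)
  have h4 : (4 : ZMod p) ≠ 0 := by
    rw [show (4 : ZMod p) = 2 * 2 by norm_num]
    exact mul_ne_zero h2 h2
  simpa [map_ofNat] using ⟨h4, hb0⟩

theorem rootCountMod_X_pow_four_add_two_prime {p : ℕ} [Fact p.Prime] (hp2 : p ≠ 2)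
    {t : ZMod p} (ht : t ^ 4 = -2) : rootCountMod (X ^ 4 + 2) p = (p - 1).gcd 4 := by
  have h2 : (-2 : ZMod p) ≠ 0 := neg_ne_zero.2 (Ring.two_ne_zero (by rwa [ZMod.ringChar_zmod_n]))
  have hcard := FiniteField.natCard_pow_eq four_ne_zero h2 ht
  rw [ZMod.card] at hcard
  rw [rootCountMod, ← hcard]
  refine Nat.card_congr (Equiv.subtypeEquivRight fun x => ?_)
  rw [aeval_X_pow_four_add_two, eq_neg_iff_add_eq_zero]

theorem rootCountMod_X_pow_four_add_two_of_mod_eight_eq_one {p : ℕ} [Fact p.Prime]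
    (hp : p % 8 = 1) (ht : ∃ t : ℕ, (t ^ 4 + 2) % p = 0) : rootCountMod (X ^ 4 + 2) p = 4 := by
  obtain ⟨t, ht⟩ := ht
  have ht' : (t : ZMod p) ^ 4 = -2 := by
    rw [eq_neg_iff_add_eq_zero]
    exact_mod_cast (ZMod.natCast_eq_zero_iff _ _).2 (Nat.dvd_of_mod_eq_zero ht)
  rw [rootCountMod_X_pow_four_add_two_prime (by omega) ht']
  exact Nat.gcd_eq_right (Nat.dvd_of_mod_eq_zero (by omega))

theorem rootCountMod_X_pow_four_add_two_of_mod_eight_eq_three {p : ℕ} [Fact p.Prime]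
    (hp : p % 8 = 3) : rootCountMod (X ^ 4 + 2) p = 2 := by
  obtain ⟨t, ht⟩ := FiniteField.exists_pow_four_eq_of_isSquare
    (by rw [ZMod.exists_sq_eq_neg_one_iff]; omega)
    ((ZMod.exists_sq_eq_neg_two_iff (by omega)).2 (Or.inr hp))
  rw [rootCountMod_X_pow_four_add_two_prime (by omega) ht, Nat.gcd_comm, Nat.gcd_rec,
    show (p - 1) % 4 = 2 by omega]
  rfl

theorem rootCountMod_X_pow_four_add_two_prime_eq_zero {p : ℕ} [Fact p.Prime]
    (hp : p % 8 = 5 ∨ p % 8 = 7) : rootCountMod (X ^ 4 + 2) p = 0 := by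
  rw [rootCountMod, Nat.card_eq_zero]
  refine Or.inl ⟨fun ⟨x, hx⟩ => ?_⟩
  rw [aeval_X_pow_four_add_two] at hx
  have hsq : IsSquare (-2 : ZMod p) := ⟨x ^ 2, by linear_combination -hx⟩
  have := (ZMod.exists_sq_eq_neg_two_iff (by omega)).1 hsq
  omega

theorem rootCountMod_X_pow_four_add_two_of_odd {m : ℕ} (hm : Odd m) :
    rootCountMod (X ^ 4 + 2) m = ∏ p ∈ m.primeFactors, rootCountMod (X ^ 4 + 2) p := by
  rw [rootCountMod_eq_prod_primeFactors _ hm.pos.ne']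
  refine Finset.prod_congr rfl fun p hp => ?_
  have hp' := Nat.prime_of_mem_primeFactors hp
  have : Fact p.Prime := ⟨hp'⟩
  have hp2 : p ≠ 2 := by
    rintro rfl
    exact Nat.not_even_iff_odd.2 hm (even_iff_two_dvd.2 (Nat.dvd_of_mem_primeFactors hp))
  exact rootCountMod_prime_pow hp' (X_pow_four_add_two_derivative_ne_zero hp2)
    (Finsupp.mem_support_iff.1 (by rwa [Nat.support_factorization]))

theorem card_filter_range_pow_four_add_two (m : ℕ) [NeZero m] :
    ((Finset.range m).filter (fun n => (n ^ 4 + 2) % m = 0)).card =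
      rootCountMod (X ^ 4 + 2) m := by
  rw [rootCountMod, ← card_filter_range_eq_natCard]
  refine congrArg Finset.card (Finset.filter_congr fun n _ => ?_)
  rw [← Nat.dvd_iff_mod_eq_zero, ← ZMod.natCast_eq_zero_iff, aeval_X_pow_four_add_two]
  push_cast; rfl

open scoped Classical in
theorem stmt_7_general (m : ℕ) (hodd : Odd m) :
    ((∀ p : ℕ, p.Prime → p ∣ m →
        (p % 8 = 1 ∧ ∃ t : ℕ, (t ^ 4 + 2) % p = 0) ∨ p % 8 = 3) →
      ((Finset.range m).filter (fun n => (n ^ 4 + 2) % m = 0)).card =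
        4 ^ (m.primeFactors.filter
              (fun p => p % 8 = 1 ∧ ∃ t : ℕ, (t ^ 4 + 2) % p = 0)).card *
        2 ^ (m.primeFactors.filter (fun p => p % 8 = 3)).card) ∧
    ((∃ p : ℕ, p.Prime ∧ p ∣ m ∧ (p % 8 = 5 ∨ p % 8 = 7)) →
      ((Finset.range m).filter (fun n => (n ^ 4 + 2) % m = 0)).card = 0) := by
  have : NeZero m := ⟨hodd.pos.ne'⟩
  rw [card_filter_range_pow_four_add_two, rootCountMod_X_pow_four_add_two_of_odd hodd]
  refine ⟨fun h => ?_, fun ⟨p, hp, hpm, h57⟩ => ?_⟩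
  · have hcount : ∀ p ∈ m.primeFactors, rootCountMod (X ^ 4 + 2) p =
        if p % 8 = 1 ∧ ∃ t : ℕ, (t ^ 4 + 2) % p = 0 then 4 else 2 := by
      intro p hp
      have hp' := Nat.prime_of_mem_primeFactors hp
      have : Fact p.Prime := ⟨hp'⟩
      rcases h p hp' (Nat.dvd_of_mem_primeFactors hp) with h1 | h3
      · rw [if_pos h1, rootCountMod_X_pow_four_add_two_of_mod_eight_eq_one h1.1 h1.2]
      · rw [if_neg (by omega), rootCountMod_X_pow_four_add_two_of_mod_eight_eq_three h3]
    have hfilter :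
        m.primeFactors.filter (fun p => ¬(p % 8 = 1 ∧ ∃ t : ℕ, (t ^ 4 + 2) % p = 0)) =
          m.primeFactors.filter (fun p => p % 8 = 3) :=
      Finset.filter_congr fun p hp => ⟨(h p (Nat.prime_of_mem_primeFactors hp)
        (Nat.dvd_of_mem_primeFactors hp)).resolve_left, fun h3 h1 => by omega⟩
    rw [Finset.prod_congr rfl hcount, Finset.prod_ite, Finset.prod_const, Finset.prod_const,
      hfilter]
  · have := Fact.mk hp
    exact Finset.prod_eq_zero (Nat.mem_primeFactors.2 ⟨hp, hpm, NeZero.ne m⟩)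
      (rootCountMod_X_pow_four_add_two_prime_eq_zero h57)

open scoped Classical in
/-- For odd m > 1 each of whose prime divisors p satisfies
(p ≡ 1 (mod 8) and −2 is a fourth power mod p) or p ≡ 3 (mod 8), the
congruence n⁴ + 2 ≡ 0 (mod m) has exactly 4^{ω₀(m)}·2^{ω₁(m)} solutions in
ℤ/mℤ; if m has a prime divisor ≡ 5 or 7 (mod 8) there are no solutions. -/
theorem stmt_7 (m : ℕ) (hm : 1 < m) (hodd : Odd m) :
    ((∀ p : ℕ, p.Prime → p ∣ m →
        (p % 8 = 1 ∧ ∃ t : ℕ, (t ^ 4 + 2) % p = 0) ∨ p % 8 = 3) →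
      ((Finset.range m).filter (fun n => (n ^ 4 + 2) % m = 0)).card =
        4 ^ (m.primeFactors.filter
              (fun p => p % 8 = 1 ∧ ∃ t : ℕ, (t ^ 4 + 2) % p = 0)).card *
        2 ^ (m.primeFactors.filter (fun p => p % 8 = 3)).card) ∧
    ((∃ p : ℕ, p.Prime ∧ p ∣ m ∧ (p % 8 = 5 ∨ p % 8 = 7)) →
      ((Finset.range m).filter (fun n => (n ^ 4 + 2) % m = 0)).card = 0) :=
  stmt_7_general m hodd
end

section
/- Let p be a prime with p ≡ 1 (mod 4), written as p = a² + b² with a odd and b even. Then 2 is a fourth power modulo p if and only if b ≡ 0 (mod 8). Equivalently, 2^{(p−1)/4} ≡ (−1)^{b/4} (mod p) when p ≡ 1 (mod 8). -/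
/-! Put `s = a + b` and `p = 8k + 1`. Modulo `p`, `a² = -b²` gives `s² = 2ab` and
`(ab)² = -a⁴`, so `s^(4k) = 2^(2k) (-1)^k a^(4k)`. By Euler's criterion and reciprocity for
Jacobi symbols, `a^(4k) = (a/p) = (b²/|a|) = 1` and `s^(4k) = (s/p) = (2a²/|s|) = χ₈(s)`.
For `b = 4c` one has `χ₈(a + 4c) = (-1)^c χ₈(a)` and `χ₈(a) = (-1)^k`, whence
`2^((p-1)/4) = (-1)^c`; in the cyclic group `(ZMod p)ˣ` of order `8k` this equals `1` exactly
when `2` is a fourth power. If `4 ∤ b`, then `p ≡ 5 (mod 8)` and `2` is not even a square. -/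

open ZMod
open scoped NumberTheorySymbols

theorem IsCyclic.exists_pow_eq_iff_pow_eq_one {G : Type*} [CommGroup G] [IsCyclic G] [Finite G]
    {d m : ℕ} (hcard : Nat.card G = d * m) (x : G) : (∃ y, y ^ d = x) ↔ x ^ m = 1 := by
  have hd : d ≠ 0 := by rintro rfl; exact Nat.card_pos.ne' (hcard.trans (zero_mul m))
  have hle : (powMonoidHom d : G →* G).range ≤ (powMonoidHom m).ker := by
    rintro _ ⟨y, rfl⟩
    simp [← pow_mul, ← hcard, pow_card_eq_one']
  have hcard_le :
      Nat.card (powMonoidHom m : G →* G).ker ≤ Nat.card (powMonoidHom d : G →* G).range := by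
    rw [card_powMonoidHom_range, card_powMonoidHom_ker, hcard, Nat.gcd_mul_left_left,
      Nat.gcd_mul_right_left, Nat.mul_div_cancel_left _ (Nat.pos_of_ne_zero hd)]
  exact SetLike.ext_iff.mp (Subgroup.eq_of_le_of_card_ge hle hcard_le) x

theorem FiniteField.exists_pow_eq_iff_pow_eq_one {F : Type*} [Field F] [Fintype F] {d m : ℕ}
    (hcard : Fintype.card F = d * m + 1) {x : F} (hx : x ≠ 0) :
    (∃ y, y ^ d = x) ↔ x ^ m = 1 := by
  have hd : d ≠ 0 := by
    rintro rfl
    have := Fintype.one_lt_card (α := F)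
    omega
  constructor
  · rintro ⟨y, rfl⟩
    have hy : y ≠ 0 := by rintro rfl; exact hx (zero_pow hd)
    rw [← pow_mul, ← FiniteField.pow_card_sub_one_eq_one y hy, hcard, Nat.add_sub_cancel]
  · intro h
    have hunits : Nat.card Fˣ = d * m := by
      rw [Nat.card_units, Nat.card_eq_fintype_card, hcard, Nat.add_sub_cancel]
    obtain ⟨y, hy⟩ := (IsCyclic.exists_pow_eq_iff_pow_eq_one hunits (Units.mk0 x hx)).mpr
      (Units.ext (by simpa using h))
    exact ⟨y, by simpa using congrArg Units.val hy⟩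

theorem jacobiSym_eq_jacobiSym_natAbs_of_mod_four_eq_one {n : ℕ} (hn : n % 4 = 1) {x : ℤ}
    (hx : Odd x) : J(x | n) = J(n | x.natAbs) := by
  have hn_odd : Odd n := Nat.odd_iff.mpr (by omega)
  have habs : J(x | n) = J(x.natAbs | n) := by
    rcases Int.natAbs_eq x with h | h
    · rw [← h]
    · conv_lhs => rw [h]
      rw [jacobiSym.neg _ hn_odd, χ₄_nat_one_mod_four hn, one_mul]
  rw [habs, jacobiSym.quadratic_reciprocity_one_mod_four' (Int.natAbs_odd.mpr hx) hn]

theorem χ₈_natAbs (x : ℤ) : χ₈ x.natAbs = χ₈ x := by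
  have hneg : ∀ y : ZMod 8, χ₈ (-y) = χ₈ y := by decide
  rcases Int.natAbs_eq x with h | h
  · conv_rhs => rw [h]
    simp
  · conv_rhs => rw [h]
    simp [hneg]

section SumOfTwoSquares

variable {n : ℕ} {a b : ℤ}

theorem sq_add_sq_emod_eight (ha : Odd a) (hb : Even b) :
    (a ^ 2 + b ^ 2) % 8 = if 4 ∣ b then 1 else 5 := by
  obtain ⟨m, rfl⟩ := ha
  obtain ⟨w, rfl⟩ := hb
  obtain ⟨e, he⟩ := Int.even_mul_succ_self m
  rcases Int.even_or_odd w with ⟨v, rfl⟩ | ⟨v, rfl⟩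
  · rw [if_pos ⟨v, by ring⟩]
    have : (2 * m + 1) ^ 2 + (v + v + (v + v)) ^ 2 = 8 * (e + 2 * v ^ 2) + 1 := by
      linear_combination 4 * he
    omega
  · rw [if_neg (by omega)]
    have :
        (2 * m + 1) ^ 2 + (2 * v + 1 + (2 * v + 1)) ^ 2 = 8 * (e + 2 * v ^ 2 + 2 * v) + 5 := by
      linear_combination 4 * he
    omega

theorem isCoprime_of_prime_eq_sq_add_sq {p : ℕ} (hp : p.Prime)
    (hab : (p : ℤ) = a ^ 2 + b ^ 2) : IsCoprime a b := by
  rw [Int.isCoprime_iff_gcd_eq_one]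
  have hsq : (Int.gcd a b : ℤ) * Int.gcd a b ∣ p := by
    rw [hab, sq, sq]
    exact dvd_add (mul_dvd_mul (Int.gcd_dvd_left _ _) (Int.gcd_dvd_left _ _))
      (mul_dvd_mul (Int.gcd_dvd_right _ _) (Int.gcd_dvd_right _ _))
  simpa [Int.isUnit_iff_natAbs_eq] using (Nat.prime_iff_prime_int.mp hp).squarefree _ hsq

theorem jacobiSym_eq_one_of_sq_add_sq (hab : (n : ℤ) = a ^ 2 + b ^ 2) (hcop : IsCoprime a b)
    (ha : Odd a) (hn : n % 4 = 1) : J(a | n) = 1 := by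
  have hmod : (n : ℤ) ≡ b ^ 2 [ZMOD a.natAbs] :=
    Int.modEq_iff_dvd.mpr (Int.natAbs_dvd.mpr ⟨-a, by rw [hab]; ring⟩)
  rw [jacobiSym_eq_jacobiSym_natAbs_of_mod_four_eq_one hn ha, jacobiSym.mod_left' hmod]
  refine jacobiSym.sq_one' ?_
  rwa [Int.natCast_natAbs, ← Int.isCoprime_iff_gcd_eq_one, IsCoprime.abs_right_iff,
    isCoprime_comm]

theorem jacobiSym_add_of_sq_add_sq (hab : (n : ℤ) = a ^ 2 + b ^ 2) (hcop : IsCoprime a b)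
    (ha : Odd a) (hb : Even b) (hn : n % 4 = 1) : J(a + b | n) = χ₈ (a + b : ℤ) := by
  have hodd : Odd (a + b) := ha.add_even hb
  have hmod : (n : ℤ) ≡ 2 * a ^ 2 [ZMOD (a + b).natAbs] :=
    Int.modEq_iff_dvd.mpr (Int.natAbs_dvd.mpr ⟨a - b, by rw [hab]; ring⟩)
  have hcop' : Int.gcd a (a + b).natAbs = 1 := by
    rw [Int.natCast_natAbs, ← Int.isCoprime_iff_gcd_eq_one, IsCoprime.abs_right_iff]
    simpa [add_comm] using hcop.add_mul_left_right 1
  rw [jacobiSym_eq_jacobiSym_natAbs_of_mod_four_eq_one hn hodd, jacobiSym.mod_left' hmod,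
    jacobiSym.mul_left, jacobiSym.sq_one' hcop', mul_one,
    jacobiSym.at_two (Int.natAbs_odd.mpr hodd), χ₈_natAbs]

end SumOfTwoSquares

theorem χ₈_add_four_mul (x c : ℤ) : χ₈ (x + 4 * c : ℤ) = (-1) ^ c.natAbs * χ₈ x := by
  rw [χ₈_int_eq_if_mod_eight, χ₈_int_eq_if_mod_eight]
  rcases Int.even_or_odd c with hc | hc
  · rw [(Int.natAbs_even.mpr hc).neg_one_pow]
    obtain ⟨d, rfl⟩ := hc
    split_ifs <;> omega
  · rw [(Int.natAbs_odd.mpr hc).neg_one_pow]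
    obtain ⟨d, rfl⟩ := hc
    split_ifs <;> omega

theorem χ₈_eq_neg_one_pow {x : ℤ} {k : ℕ} (h : x ^ 2 ≡ 8 * k + 1 [ZMOD 16]) :
    χ₈ x = (-1) ^ k := by
  have hsq : x ^ 2 ≡ (x % 8) ^ 2 [ZMOD 16] := by
    have hx := Int.mul_ediv_add_emod x 8
    refine Int.modEq_iff_dvd.mpr ⟨-(x / 8) * (x % 8 + 4 * (x / 8)), ?_⟩
    linear_combination (x % 8 + 8 * (x / 8) + x) * hx
  have hmod : (x % 8) ^ 2 % 16 = (8 * k + 1) % 16 := hsq.symm.trans h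
  have hr0 := Int.emod_nonneg x (by norm_num : (8 : ℤ) ≠ 0)
  have hr8 := Int.emod_lt_of_pos x (by norm_num : (0 : ℤ) < 8)
  rw [χ₈_int_eq_if_mod_eight]
  rcases Nat.even_or_odd k with hk | hk <;> rw [hk.neg_one_pow] <;> obtain ⟨j, rfl⟩ := hk <;>
    interval_cases hr : x % 8 <;> norm_num at hmod <;> split_ifs <;> omega

theorem add_pow_four_mul_of_sq_add_sq_eq_zero {R : Type*} [CommRing R] {x y : R}
    (h : x ^ 2 + y ^ 2 = 0) (k : ℕ) :
    (x + y) ^ (4 * k) = 2 ^ (2 * k) * (-1) ^ k * x ^ (4 * k) := by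
  have hsq : (x + y) ^ 2 = 2 * (x * y) := by linear_combination h
  have hprod : (x * y) ^ 2 = -x ^ 4 := by linear_combination x ^ 2 * h
  calc (x + y) ^ (4 * k) = (((x + y) ^ 2) ^ 2) ^ k := by rw [← pow_mul, ← pow_mul]; ring_nf
    _ = (4 * (-x ^ 4)) ^ k := by rw [hsq, mul_pow, hprod]; norm_num
    _ = 2 ^ (2 * k) * (-1) ^ k * x ^ (4 * k) := by
      rw [mul_pow, neg_pow, pow_mul, pow_mul]; norm_num; ring

theorem two_pow_eq_neg_one_pow_of_sq_add_sq {p : ℕ} [Fact p.Prime] {a c : ℤ} {k : ℕ}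
    (hab : (p : ℤ) = a ^ 2 + (4 * c) ^ 2) (ha : Odd a) (hk : p = 8 * k + 1) :
    (2 : ZMod p) ^ (2 * k) = (-1) ^ c.natAbs := by
  have hcop := isCoprime_of_prime_eq_sq_add_sq Fact.out hab
  have hp4 : p % 4 = 1 := by omega
  have hhalf : p / 2 = 4 * k := by omega
  have ha4 : (a : ZMod p) ^ (4 * k) = 1 := by
    have := legendreSym.eq_pow p a
    rwa [jacobiSym.legendreSym.to_jacobiSym, jacobiSym_eq_one_of_sq_add_sq hab hcop ha hp4,
      hhalf, Int.cast_one, eq_comm] at this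
  have hs4 : ((a : ZMod p) + ((4 * c : ℤ) : ZMod p)) ^ (4 * k) = χ₈ (a + 4 * c : ℤ) := by
    have := legendreSym.eq_pow p (a + 4 * c)
    rw [jacobiSym.legendreSym.to_jacobiSym,
      jacobiSym_add_of_sq_add_sq hab hcop ha ⟨2 * c, by ring⟩ hp4, hhalf] at this
    simpa only [Int.cast_add] using this.symm
  have hsum : (a : ZMod p) ^ 2 + ((4 * c : ℤ) : ZMod p) ^ 2 = 0 := by
    exact_mod_cast (congrArg (Int.cast : ℤ → ZMod p) hab).symm.trans (by simp)
  have hsign : (-1) ^ k * χ₈ (a + 4 * c : ℤ) = (-1) ^ c.natAbs := by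
    have h16 : a ^ 2 ≡ 8 * k + 1 [ZMOD 16] := by
      refine Int.modEq_iff_dvd.mpr ⟨c ^ 2, ?_⟩
      push_cast [hk] at hab
      linear_combination hab
    rw [χ₈_add_four_mul, χ₈_eq_neg_one_pow h16, mul_left_comm, ← mul_pow]
    norm_num
  calc (2 : ZMod p) ^ (2 * k) = (-1) ^ k * ((-1) ^ k * 2 ^ (2 * k)) := by
        rw [← mul_assoc, ← mul_pow]; norm_num
    _ = (-1) ^ k * ((a : ZMod p) + ((4 * c : ℤ) : ZMod p)) ^ (4 * k) := by
        rw [add_pow_four_mul_of_sq_add_sq_eq_zero hsum, ha4]; ring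
    _ = (((-1) ^ k * χ₈ (a + 4 * c : ℤ) : ℤ) : ZMod p) := by rw [hs4]; push_cast; rfl
    _ = (-1) ^ c.natAbs := by rw [hsign]; push_cast; rfl

theorem stmt_17_general (p : ℕ) (hp : p.Prime) (a b : ℤ)
    (hab : (p : ℤ) = a ^ 2 + b ^ 2) (ha : Odd a) (hb : Even b) :
    ((∃ t : ZMod p, t ^ 4 = 2) ↔ (8 : ℤ) ∣ b) ∧
    (p % 8 = 1 →
      (2 : ZMod p) ^ ((p - 1) / 4) = (-1 : ZMod p) ^ (b / 4).natAbs) := by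
  have := Fact.mk hp
  have hp8 := sq_add_sq_emod_eight ha hb
  rw [← hab] at hp8
  by_cases h4 : (4 : ℤ) ∣ b
  · rw [if_pos h4] at hp8
    obtain ⟨c, rfl⟩ := h4
    obtain ⟨k, hk⟩ : ∃ k, p = 8 * k + 1 := ⟨p / 8, by omega⟩
    have key := two_pow_eq_neg_one_pow_of_sq_add_sq hab ha hk
    have : Fact (2 < p) := ⟨by have := hp.two_le; omega⟩
    have h2 : (2 : ZMod p) ≠ 0 := Ring.two_ne_zero (by rw [ZMod.ringChar_zmod_n]; omega)
    rw [show (p - 1) / 4 = 2 * k by omega, Int.mul_ediv_cancel_left _ four_ne_zero]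
    refine ⟨?_, fun _ => key⟩
    rw [FiniteField.exists_pow_eq_iff_pow_eq_one (d := 4) (m := 2 * k)
        (by rw [ZMod.card]; omega) h2,
      key, neg_one_pow_eq_one_iff_even neg_one_ne_one, Int.natAbs_even, even_iff_two_dvd]
    omega
  · rw [if_neg h4] at hp8
    have hnsq : ¬IsSquare (2 : ZMod p) := by
      rw [ZMod.exists_sq_eq_two_iff (by omega)]
      omega
    refine ⟨iff_of_false (fun ⟨t, ht⟩ => hnsq ⟨t ^ 2, by rw [← ht]; ring⟩)
      (fun h8 => h4 (dvd_trans ⟨2, rfl⟩ h8)), fun h => by omega⟩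

/-- For a prime p ≡ 1 (mod 4) written as p = a² + b² with a odd and b even,
2 is a fourth power mod p iff 8 ∣ b; equivalently, when p ≡ 1 (mod 8),
2^{(p−1)/4} ≡ (−1)^{b/4} (mod p). -/
theorem stmt_17 (p : ℕ) (hp : p.Prime) (hp4 : p % 4 = 1) (a b : ℤ)
    (hab : (p : ℤ) = a ^ 2 + b ^ 2) (ha : Odd a) (hb : Even b) :
    ((∃ t : ZMod p, t ^ 4 = 2) ↔ (8 : ℤ) ∣ b) ∧
    (p % 8 = 1 →
      (2 : ZMod p) ^ ((p - 1) / 4) = (-1 : ZMod p) ^ (b / 4).natAbs) :=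
  stmt_17_general p hp a b hab ha hb
end
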